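/- Fix μ > 0 and define f, λ : ℂ² \ {0} → ℝ by f(z) = |z|²/(|z|² + μ) and λ(z) = 1/(2|z|²), where |z|² = |z₁|² + |z₂|². Then for every z ≠ 0, λ(z)·Df(z) = (f(z)² − f(z))·Dλ(z) as real-linear maps from ℂ² to ℝ, where D denotes the real Fréchet derivative. (This is the equation λ·df = (f² − f)·dλ whose solution produces the BPST instanton connection A = (|z|²/(|z|² + μ))·γ⁻¹dγ.) -/

import Mathlib

/-- `|z|² = |z₁|² + |z₂|²` on `ℂ²`. -/
noncomputable def normSq2 (z : ℂ × ℂ) : ℝ :=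
  Complex.normSq z.1 + Complex.normSq z.2

/-- The BPST profile function `f(z) = |z|²/(|z|² + μ)`. -/
noncomputable def fBPST (μ : ℝ) (z : ℂ × ℂ) : ℝ :=
  normSq2 z / (normSq2 z + μ)

/-- `λ(z) = 1/(2|z|²)`. -/
noncomputable def lamBPST (z : ℂ × ℂ) : ℝ :=
  1 / (2 * normSq2 z)

/-!
Both `f` and `λ` are functions of `t = |z|²` alone, so by the chain rule `Df` and `Dλ` are
multiples of the same covector `D(|z|²)`. The equation `λ·Df = (f² − f)·Dλ` thus reduces to the
scalar ODE `h·g' = (g² − g)·h'` for `g t = t/(t + μ)` and `h t = 1/(2t)`, which is checked directly: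
both sides equal `μ / (2t(t + μ)²)`.
-/

theorem smul_fderiv_comp_eq_of_hasDerivAt {E : Type*} [NormedAddCommGroup E] [NormedSpace ℝ E]
    {N : E → ℝ} {g h : ℝ → ℝ} {g' h' a b : ℝ} {z : E} (hN : DifferentiableAt ℝ N z)
    (hg : HasDerivAt g g' (N z)) (hh : HasDerivAt h h' (N z)) (hab : a * g' = b * h') :
    a • fderiv ℝ (g ∘ N) z = b • fderiv ℝ (h ∘ N) z := by
  rw [(hg.comp_hasFDerivAt z hN.hasFDerivAt).fderiv, (hh.comp_hasFDerivAt z hN.hasFDerivAt).fderiv,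
    smul_smul, smul_smul, hab]

theorem differentiable_normSq2 : Differentiable ℝ normSq2 := by
  unfold normSq2
  simp only [Complex.normSq_apply]
  fun_prop

theorem normSq2_pos {z : ℂ × ℂ} (hz : z ≠ 0) : 0 < normSq2 z := by
  rw [Ne, Prod.ext_iff] at hz
  rcases not_and_or.mp hz with h | h
  · exact add_pos_of_pos_of_nonneg (Complex.normSq_pos.mpr h) (Complex.normSq_nonneg _)
  · exact add_pos_of_nonneg_of_pos (Complex.normSq_nonneg _) (Complex.normSq_pos.mpr h)

theorem hasDerivAt_div_add_const {μ t : ℝ} (ht : t + μ ≠ 0) :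
    HasDerivAt (fun s : ℝ => s / (s + μ)) (μ / (t + μ) ^ 2) t :=
  ((hasDerivAt_id' t).div ((hasDerivAt_id' t).add_const μ) ht).congr_deriv (by ring)

theorem hasDerivAt_one_div_two_mul {t : ℝ} (ht : t ≠ 0) :
    HasDerivAt (fun s : ℝ => 1 / (2 * s)) (-(1 / (2 * t ^ 2))) t :=
  ((hasDerivAt_const t (1 : ℝ)).div ((hasDerivAt_id' t).const_mul 2) (by positivity)).congr_deriv
    (by field_simp; ring)

theorem one_div_two_mul_mul_eq {μ t : ℝ} (ht : t ≠ 0) (htμ : t + μ ≠ 0) :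
    1 / (2 * t) * (μ / (t + μ) ^ 2) =
      ((t / (t + μ)) ^ 2 - t / (t + μ)) * -(1 / (2 * t ^ 2)) := by
  field_simp
  ring

/-- the BPST profile `f(z) = |z|²/(|z|² + μ)` solves the equation
`λ·df = (f² − f)·dλ` with `λ = 1/(2|z|²)`, where `D` is the real Fréchet
derivative on `ℂ² ≃ ℝ⁴`. -/
theorem fBPST_solves_ode (μ : ℝ) (hμ : 0 < μ) :
    ∀ z : ℂ × ℂ, z ≠ 0 →
      lamBPST z • fderiv ℝ (fBPST μ) z =
        ((fBPST μ z) ^ 2 - fBPST μ z) • fderiv ℝ lamBPST z := by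
  intro z hz
  have ht : normSq2 z ≠ 0 := (normSq2_pos hz).ne'
  have htμ : normSq2 z + μ ≠ 0 := (add_pos (normSq2_pos hz) hμ).ne'
  exact smul_fderiv_comp_eq_of_hasDerivAt (differentiable_normSq2 z)
    (hasDerivAt_div_add_const htμ) (hasDerivAt_one_div_two_mul ht) (one_div_two_mul_mul_eq ht htμ)
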